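/- arXiv:1812.02315 — 3 statements merged into one kernel-verified Lean document; each statement's English description precedes it below -/
import Mathlib

section
/- Let X be a metric space and let U1, U2, V1, V2 be nonempty bounded subsets of X, each of positive diameter. Suppose that dist(U1, U2) ≥ 2·min(diam U1, diam U2) and dist(V1, V2) ≥ 2·min(diam V1, diam V2). Then there exist indices i, j ∈ {1, 2} such that dist(Ui, Vj) > 0. -/
/-- The distance between two subsets of a metric space: the infimum of
`dist a b` over `a ∈ A`, `b ∈ B`. -/
noncomputable def setDist {X : Type*} [MetricSpace X] (A B : Set X) : ℝ :=
  sInf (Set.image2 dist A B)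

lemma setDist_nonneg {X : Type*} [MetricSpace X] (A B : Set X) : 0 ≤ setDist A B := by
  apply Real.sInf_nonneg
  rintro x ⟨a, ha, b, hb, rfl⟩
  exact dist_nonneg

lemma setDist_bddBelow {X : Type*} [MetricSpace X] (A B : Set X) :
    BddBelow (Set.image2 dist A B) := by
  refine ⟨0, ?_⟩
  rintro x ⟨a, ha, b, hb, rfl⟩
  exact dist_nonneg

lemma setDist_le_dist {X : Type*} [MetricSpace X] {A B : Set X} {a b : X}
    (ha : a ∈ A) (hb : b ∈ B) : setDist A B ≤ dist a b :=
  csInf_le (setDist_bddBelow A B) (Set.mem_image2_of_mem ha hb)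

lemma setDist_comm {X : Type*} [MetricSpace X] (A B : Set X) :
    setDist A B = setDist B A := by
  unfold setDist
  congr 1
  ext x
  constructor
  · rintro ⟨a, ha, b, hb, rfl⟩; exact ⟨b, hb, a, ha, dist_comm b a⟩
  · rintro ⟨b, hb, a, ha, rfl⟩; exact ⟨a, ha, b, hb, dist_comm a b⟩

lemma exists_dist_lt_of_setDist_zero {X : Type*} [MetricSpace X] {A B : Set X}
    (hA : A.Nonempty) (hB : B.Nonempty) (h : setDist A B = 0) {ε : ℝ} (hε : 0 < ε) :
    ∃ a ∈ A, ∃ b ∈ B, dist a b < ε := by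
  have hne : (Set.image2 dist A B).Nonempty := Set.Nonempty.image2 hA hB
  have hlt : sInf (Set.image2 dist A B) < ε := by
    rw [show sInf (Set.image2 dist A B) = setDist A B from rfl, h]; exact hε
  obtain ⟨x, ⟨a, ha, b, hb, rfl⟩, hx⟩ := exists_lt_of_csInf_lt hne hlt
  exact ⟨a, ha, b, hb, hx⟩

lemma setDist_le_diam_of_setDist_zero {X : Type*} [MetricSpace X] {A B C : Set X}
    (hA : A.Nonempty) (hB : B.Nonempty) (hCne : C.Nonempty) (hC : Bornology.IsBounded C)
    (h1 : setDist A C = 0) (h2 : setDist B C = 0) :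
    setDist A B ≤ Metric.diam C := by
  refine le_of_forall_pos_le_add ?_
  intro ε hε
  obtain ⟨a, ha, c, hc, hac⟩ := exists_dist_lt_of_setDist_zero hA hCne h1 (half_pos hε)
  obtain ⟨b, hb, c', hc', hbc'⟩ := exists_dist_lt_of_setDist_zero hB hCne h2 (half_pos hε)
  have hcc' : dist c c' ≤ Metric.diam C := Metric.dist_le_diam_of_mem hC hc hc'
  have : dist a b ≤ dist a c + dist c c' + dist c' b := dist_triangle4 a c c' b
  have hcb : dist c' b = dist b c' := dist_comm c' b
  have hab : setDist A B ≤ dist a b := setDist_le_dist ha hb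
  linarith

/-- If `dist(U1,U2) ≥ 2 min(diam U1, diam U2)` and `dist(V1,V2) ≥ 2 min(diam V1, diam V2)`
for nonempty bounded sets of positive diameter, then some pair `(Ui, Vj)` is at positive
distance. -/
theorem exists_pair_pos_setDist {X : Type*} [MetricSpace X]
    (U₁ U₂ V₁ V₂ : Set X)
    (hU₁ : U₁.Nonempty) (hU₂ : U₂.Nonempty) (hV₁ : V₁.Nonempty) (hV₂ : V₂.Nonempty)
    (hbU₁ : Bornology.IsBounded U₁) (hbU₂ : Bornology.IsBounded U₂)
    (hbV₁ : Bornology.IsBounded V₁) (hbV₂ : Bornology.IsBounded V₂)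
    (hdU₁ : 0 < Metric.diam U₁) (hdU₂ : 0 < Metric.diam U₂)
    (hdV₁ : 0 < Metric.diam V₁) (hdV₂ : 0 < Metric.diam V₂)
    (hU : setDist U₁ U₂ ≥ 2 * min (Metric.diam U₁) (Metric.diam U₂))
    (hV : setDist V₁ V₂ ≥ 2 * min (Metric.diam V₁) (Metric.diam V₂)) :
    ∃ i j : Fin 2, 0 < setDist (![U₁, U₂] i) (![V₁, V₂] j) := by
  by_contra hcon
  push_neg at hcon
  have h11 : setDist U₁ V₁ = 0 := le_antisymm (by simpa using hcon 0 0) (setDist_nonneg _ _)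
  have h12 : setDist U₁ V₂ = 0 := le_antisymm (by simpa using hcon 0 1) (setDist_nonneg _ _)
  have h21 : setDist U₂ V₁ = 0 := le_antisymm (by simpa using hcon 1 0) (setDist_nonneg _ _)
  have h22 : setDist U₂ V₂ = 0 := le_antisymm (by simpa using hcon 1 1) (setDist_nonneg _ _)
  have hVU₁ : setDist V₁ V₂ ≤ Metric.diam U₁ :=
    setDist_le_diam_of_setDist_zero hV₁ hV₂ hU₁ hbU₁
      (by rw [setDist_comm]; exact h11) (by rw [setDist_comm]; exact h12)
  have hVU₂ : setDist V₁ V₂ ≤ Metric.diam U₂ :=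
    setDist_le_diam_of_setDist_zero hV₁ hV₂ hU₂ hbU₂
      (by rw [setDist_comm]; exact h21) (by rw [setDist_comm]; exact h22)
  have hUV₁ : setDist U₁ U₂ ≤ Metric.diam V₁ :=
    setDist_le_diam_of_setDist_zero hU₁ hU₂ hV₁ hbV₁ h11 h21
  have hUV₂ : setDist U₁ U₂ ≤ Metric.diam V₂ :=
    setDist_le_diam_of_setDist_zero hU₁ hU₂ hV₂ hbV₂ h12 h22
  have hV' : setDist V₁ V₂ ≤ min (Metric.diam U₁) (Metric.diam U₂) := le_min hVU₁ hVU₂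
  have hU' : setDist U₁ U₂ ≤ min (Metric.diam V₁) (Metric.diam V₂) := le_min hUV₁ hUV₂
  have hmU : 0 < min (Metric.diam U₁) (Metric.diam U₂) := lt_min hdU₁ hdU₂
  have hmV : 0 < min (Metric.diam V₁) (Metric.diam V₂) := lt_min hdV₁ hdV₂
  linarith
end

section
/- Let G be a group acting by isometries on a metric space X, let y ∈ X be a point whose orbit G·y is compact, and let ρ > 0. Then there exists a finite subset s of the orbit G·y such that the open balls B(z, ρ) for z ∈ s are pairwise disjoint, and the open ρ-neighborhood of the orbit, {x ∈ X : infDist(x, G·y) < ρ}, is contained in the union of the enlarged balls B(z, 5ρ) over z ∈ s. -/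
open Set Metric

/-- A `ρ`-separated subset of a compact set is finite. -/
lemma separated_finite {X : Type*} [MetricSpace X] {K u : Set X} (hK : IsCompact K)
    (huK : u ⊆ K) {ρ : ℝ} (hρ : 0 < ρ) (hsep : ∀ z ∈ u, ∀ z' ∈ u, z ≠ z' → ρ < dist z z') :
    u.Finite := by
  obtain ⟨t, htK, htfin, htcov⟩ := hK.finite_cover_balls (e := ρ / 2) (by linarith)
  have hmem : ∀ z ∈ u, ∃ c ∈ t, z ∈ ball c (ρ / 2) := by
    intro z hz
    simpa using htcov (huK hz)
  choose f hf hfb using hmem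
  have key : ∀ (z : X) (hz : z ∈ u) (z' : X) (hz' : z' ∈ u), f z hz = f z' hz' → z = z' := by
    intro z hz z' hz' h
    by_contra hne
    have h1 := hfb z hz
    have h2 := hfb z' hz'
    rw [h] at h1
    have hlt : dist z z' < ρ := by
      calc dist z z' ≤ dist z (f z' hz') + dist z' (f z' hz') := dist_triangle_right _ _ _
        _ < ρ / 2 + ρ / 2 := add_lt_add (by simpa [dist_comm] using h1)
            (by simpa [dist_comm] using h2)
        _ = ρ := by ring
    exact absurd (hsep z hz z' hz' hne) (not_lt.2 hlt.le)
  have : Finite (↥t) := htfin.to_subtype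
  have hfin : Finite u := Finite.of_injective (fun z : u => (⟨f z.1 z.2, hf z.1 z.2⟩ : t))
    (fun a b hab => Subtype.ext (key a.1 a.2 b.1 b.2 (by simpa using hab)))
  exact Set.toFinite u

/-- Ball covering of tubes: if `G` acts by isometries on `X` and the orbit of `y` is compact,
then for any `ρ > 0` there is a finite set `s` of points of the orbit such that the balls
`B(z, ρ)`, `z ∈ s`, are pairwise disjoint, while the open `ρ`-tube around the orbit is covered
by the enlarged balls `B(z, 5ρ)`. -/
theorem tube_covered_by_balls
    {G : Type*} [Group G] {X : Type*} [MetricSpace X] [MulAction G X]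
    (hiso : ∀ g : G, Isometry (fun p : X => g • p))
    (y : X) (hcpt : IsCompact (MulAction.orbit G y)) (ρ : ℝ) (hρ : 0 < ρ) :
    ∃ s : Finset X, (s : Set X) ⊆ MulAction.orbit G y ∧
      ((s : Set X).Pairwise fun z z' => Disjoint (Metric.ball z ρ) (Metric.ball z' ρ)) ∧
      {x : X | Metric.infDist x (MulAction.orbit G y) < ρ} ⊆
        ⋃ z ∈ s, Metric.ball z (5 * ρ) := by
  obtain ⟨u, huorb, hdisj, hcov⟩ :=
    Vitali.exists_disjoint_subfamily_covering_enlargement_closedBall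
      (MulAction.orbit G y) (id) (fun _ => ρ) ρ (fun _ _ => le_rfl) 4 (by norm_num)
  -- u is ρ-separated, hence finite
  have hsep : ∀ z ∈ u, ∀ z' ∈ u, z ≠ z' → ρ < dist z z' := by
    intro z hz z' hz' hne
    by_contra hle
    push_neg at hle
    have := hdisj hz hz' hne
    have hz'mem : z' ∈ closedBall (id z) ρ ∩ closedBall (id z') ρ :=
      ⟨by simpa [dist_comm] using hle, mem_closedBall_self hρ.le⟩
    exact (this.ne_of_mem hz'mem.1 hz'mem.2) rfl
  have hufin : u.Finite := separated_finite hcpt huorb hρ hsep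
  refine ⟨hufin.toFinset, ?_, ?_, ?_⟩
  · simpa using huorb
  · intro z hz z' hz' hne
    have := hdisj (by simpa using hz) (by simpa using hz') hne
    exact (this.mono ball_subset_closedBall ball_subset_closedBall)
  · intro x hx
    simp only [Set.mem_setOf_eq] at hx
    obtain ⟨p, hp, hpd⟩ := (Metric.infDist_lt_iff ⟨y, MulAction.mem_orbit_self y⟩).mp hx
    obtain ⟨z, hzu, hsub⟩ := hcov p hp
    have hpz : dist p z ≤ 4 * ρ := by
      have := hsub (mem_closedBall_self hρ.le)
      simpa using this
    have : dist x z < 5 * ρ := by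
      calc dist x z ≤ dist x p + dist p z := dist_triangle _ _ _
        _ < ρ + 4 * ρ := add_lt_add_of_lt_of_le hpd hpz
        _ = 5 * ρ := by ring
    exact Set.mem_biUnion (by simp [hzu] : z ∈ (hufin.toFinset : Set X)) (mem_ball.2 this)
end

section
/- Let G be a group acting by isometries on a metric space X, let y ∈ X have compact orbit G·y, and let ρ > 0. Then there exists a finite subset s of G·y such that: the open balls B(z, ρ), z ∈ s, are pairwise disjoint; the tube T_ρ = {x ∈ X : infDist(x, G·y) < ρ} is contained in ⋃_{z∈s} B(z, 5ρ); and for every G-invariant Borel measure ν on X (that is, the pushforward of ν under each map p ↦ g·p equals ν), one has card(s) · ν(B(y, ρ)) ≤ ν(T_ρ) ≤ card(s) · ν(B(y, 5ρ)). -/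
open MeasureTheory ENNReal

/-- Ball covering of tubes with measure estimates: if `G` acts by isometries on `X` and the
orbit of `y` is compact, then for any `ρ > 0` there is a finite set `s` of points of the
orbit such that the balls `B(z, ρ)`, `z ∈ s`, are pairwise disjoint, the open `ρ`-tube
`T_ρ` around the orbit is covered by the balls `B(z, 5ρ)`, and for every `G`-invariant Borel
measure `ν` one has `card s · ν(B(y, ρ)) ≤ ν(T_ρ) ≤ card s · ν(B(y, 5ρ))`. -/
theorem tube_covered_by_balls_measure
    {G : Type*} [Group G] {X : Type*} [MetricSpace X] [MeasurableSpace X] [BorelSpace X]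
    [MulAction G X]
    (hiso : ∀ g : G, Isometry (fun p : X => g • p))
    (y : X) (hcpt : IsCompact (MulAction.orbit G y)) (ρ : ℝ) (hρ : 0 < ρ) :
    ∃ s : Finset X, (s : Set X) ⊆ MulAction.orbit G y ∧
      ((s : Set X).Pairwise fun z z' => Disjoint (Metric.ball z ρ) (Metric.ball z' ρ)) ∧
      ({x : X | Metric.infDist x (MulAction.orbit G y) < ρ} ⊆
        ⋃ z ∈ s, Metric.ball z (5 * ρ)) ∧
      (∀ ν : Measure X, (∀ g : G, Measure.map (fun p : X => g • p) ν = ν) →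
        (s.card : ℝ≥0∞) * ν (Metric.ball y ρ) ≤
            ν {x : X | Metric.infDist x (MulAction.orbit G y) < ρ} ∧
          ν {x : X | Metric.infDist x (MulAction.orbit G y) < ρ} ≤
            (s.card : ℝ≥0∞) * ν (Metric.ball y (5 * ρ))) := by
  classical
  obtain ⟨t, hts, htf, htcover⟩ := hcpt.finite_cover_balls hρ
  set c : Finset X := htf.toFinset with hc
  have hct : (c : Set X) = t := htf.coe_toFinset
  -- maximal 2ρ-separated subset of c
  set S : Finset (Finset X) :=
    c.powerset.filter (fun u => (↑u : Set X).Pairwise fun z z' => 2 * ρ ≤ dist z z') with hS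
  have hSne : S.Nonempty := ⟨∅, by simp [hS]⟩
  obtain ⟨s, hsS, hsmax⟩ := S.exists_max_image Finset.card hSne
  rw [hS, Finset.mem_filter, Finset.mem_powerset] at hsS
  obtain ⟨hsc, hsep⟩ := hsS
  have hsorb : (s : Set X) ⊆ MulAction.orbit G y := by
    intro z hz
    exact hts (hct ▸ (Finset.coe_subset.2 hsc) hz)
  -- every point of t is within 2ρ of s
  have hnear : ∀ p ∈ t, ∃ z ∈ s, dist p z < 2 * ρ := by
    intro p hp
    by_cases hps : p ∈ s
    · exact ⟨p, hps, by simpa using by positivity⟩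
    · by_contra h
      push_neg at h
      have hins : insert p s ∈ S := by
        rw [hS, Finset.mem_filter, Finset.mem_powerset]
        constructor
        · exact Finset.insert_subset (by rw [← hct] at hp; exact hp) hsc
        · rw [Finset.coe_insert]
          refine Set.Pairwise.insert hsep ?_
          intro z hz _
          have := h z hz
          constructor
          · exact this
          · rwa [dist_comm]
      have := hsmax _ hins
      rw [Finset.card_insert_of_notMem hps] at this
      omega
  refine ⟨s, hsorb, ?_, ?_, ?_⟩
  · intro z hz z' hz' hne
    exact Metric.ball_disjoint_ball (by linarith [hsep hz hz' hne])
  · intro x hx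
    simp only [Set.mem_setOf_eq] at hx
    obtain ⟨q, hq, hxq⟩ :=
      (Metric.infDist_lt_iff ⟨y, MulAction.mem_orbit_self y⟩).1 hx
    obtain ⟨p, hp, hqp⟩ := Set.mem_iUnion₂.1 (htcover hq)
    obtain ⟨z, hz, hpz⟩ := hnear p hp
    refine Set.mem_biUnion hz ?_
    rw [Metric.mem_ball] at *
    calc dist x z ≤ dist x q + dist q p + dist p z := dist_triangle4 x q p z
      _ < ρ + ρ + 2 * ρ := by gcongr
      _ < 5 * ρ := by linarith
  · intro ν hν
    have hball : ∀ z ∈ MulAction.orbit G y, ∀ r : ℝ,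
        ν (Metric.ball z r) = ν (Metric.ball y r) := by
      rintro _ ⟨g, rfl⟩ r
      have hpre : (fun p : X => g • p) ⁻¹' Metric.ball (g • y) r = Metric.ball y r := by
        ext p
        simp [Metric.mem_ball, (hiso g).dist_eq p y]
      conv_lhs => rw [← hν g]
      rw [Measure.map_apply (hiso g).continuous.measurable measurableSet_ball, hpre]
    have hdisj : Set.PairwiseDisjoint (s : Set X) (fun z => Metric.ball z ρ) := by
      intro z hz z' hz' hne
      exact Metric.ball_disjoint_ball (by linarith [hsep hz hz' hne])
    constructor
    · have hsub : (⋃ z ∈ s, Metric.ball z ρ) ⊆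
          {x : X | Metric.infDist x (MulAction.orbit G y) < ρ} := by
        intro x hx
        obtain ⟨z, hz, hxz⟩ := Set.mem_iUnion₂.1 hx
        exact lt_of_le_of_lt (Metric.infDist_le_dist_of_mem (hsorb hz)) hxz
      calc (s.card : ℝ≥0∞) * ν (Metric.ball y ρ)
          = ∑ z ∈ s, ν (Metric.ball z ρ) := by
            rw [Finset.sum_congr rfl fun z hz => hball z (hsorb hz) ρ,
              Finset.sum_const, nsmul_eq_mul]
        _ = ν (⋃ z ∈ s, Metric.ball z ρ) :=
            (measure_biUnion_finset hdisj fun z _ => measurableSet_ball).symm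
        _ ≤ _ := measure_mono hsub
    · calc ν {x : X | Metric.infDist x (MulAction.orbit G y) < ρ}
          ≤ ν (⋃ z ∈ s, Metric.ball z (5 * ρ)) := by
            apply measure_mono
            intro x hx
            simp only [Set.mem_setOf_eq] at hx
            obtain ⟨q, hq, hxq⟩ :=
              (Metric.infDist_lt_iff ⟨y, MulAction.mem_orbit_self y⟩).1 hx
            obtain ⟨p, hp, hqp⟩ := Set.mem_iUnion₂.1 (htcover hq)
            obtain ⟨z, hz, hpz⟩ := hnear p hp
            refine Set.mem_biUnion hz ?_
            rw [Metric.mem_ball] at *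
            calc dist x z ≤ dist x q + dist q p + dist p z := dist_triangle4 x q p z
              _ < ρ + ρ + 2 * ρ := by gcongr
              _ < 5 * ρ := by linarith
        _ ≤ ∑ z ∈ s, ν (Metric.ball z (5 * ρ)) := measure_biUnion_finset_le s _
        _ = (s.card : ℝ≥0∞) * ν (Metric.ball y (5 * ρ)) := by
            rw [Finset.sum_congr rfl fun z hz => hball z (hsorb hz) (5 * ρ),
              Finset.sum_const, nsmul_eq_mul]
end
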